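/- Let S = (N, M₀) be a live H1S-WMG≤ system with incidence matrix I. For every T-vector Y ∈ ℕ^T and marking M with M₀ + I·Y = M, there exist a marking M' and a firing sequence σ feasible at M₀ leading to M' such that P(σ) ≥ Y componentwise, and the residue σ ⧵ Y is feasible at M and also leads to M'. Consequently (N, M) is live. -/

import Mathlib

open Classical

structure PetriNet (P T : Type) where
  pre  : P → T → ℕ
  post : T → P → ℕ

namespace PetriNet

variable {P T : Type}

def enabled (N : PetriNet P T) (M : P → ℕ) (t : T) : Prop :=
  ∀ p, N.pre p t ≤ M p

def fire (N : PetriNet P T) (M : P → ℕ) (t : T) : P → ℕ :=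
  fun p => M p - N.pre p t + N.post t p

def feasible (N : PetriNet P T) : (P → ℕ) → List T → Prop
  | _, [] => True
  | M, t :: σ => N.enabled M t ∧ N.feasible (N.fire M t) σ

def fireSeq (N : PetriNet P T) : (P → ℕ) → List T → (P → ℕ)
  | M, [] => M
  | M, t :: σ => N.fireSeq (N.fire M t) σ

/-- `M'` is reachable from `M` by some feasible firing sequence. -/
def reach (N : PetriNet P T) (M M' : P → ℕ) : Prop :=
  ∃ σ : List T, N.feasible M σ ∧ N.fireSeq M σ = M'

/-- Liveness: from every reachable marking, every transition can eventually be enabled. -/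
def live (N : PetriNet P T) (M0 : P → ℕ) : Prop :=
  ∀ M, N.reach M0 M → ∀ t, ∃ M', N.reach M M' ∧ N.enabled M' t

def incidence (N : PetriNet P T) (p : P) (t : T) : ℤ :=
  (N.post t p : ℤ) - (N.pre p t : ℤ)

/-- Potential reachability: the state equation `M = M0 + I·Y` has a solution `Y ∈ ℕ^T`. -/
def potReach [Fintype T] (N : PetriNet P T) (M0 M : P → ℕ) : Prop :=
  ∃ Y : T → ℕ, ∀ p, (M p : ℤ) = (M0 p : ℤ) + ∑ t, N.incidence p t * (Y t : ℤ)

/-- A siphon: a nonempty set of places whose set of input transitions is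
included in its set of output transitions. -/
def siphon (N : PetriNet P T) (D : Set P) : Prop :=
  D.Nonempty ∧ ∀ t, (∃ p ∈ D, 0 < N.post t p) → ∃ p ∈ D, 0 < N.pre p t

/-- `D` is deadlocked at `M`: every place of `D` marks below each of its output weights. -/
def deadlockedAt (N : PetriNet P T) (D : Set P) (M : P → ℕ) : Prop :=
  ∀ p ∈ D, ∀ t, 0 < N.pre p t → M p < N.pre p t

def reversible (N : PetriNet P T) (M0 : P → ℕ) : Prop :=
  ∀ M, N.reach M0 M → N.reach M M0

def deadlockable (N : PetriNet P T) (M0 : P → ℕ) : Prop :=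
  ∃ M, N.reach M0 M ∧ ∀ t, ¬ N.enabled M t

def bounded (N : PetriNet P T) (M0 : P → ℕ) : Prop :=
  ∃ k, ∀ M, N.reach M0 M → ∀ p, M p ≤ k

def structBounded (N : PetriNet P T) : Prop :=
  ∀ M0 : P → ℕ, N.bounded M0

/-- All output weights of each place are equal. -/
def homogeneous (N : PetriNet P T) : Prop :=
  ∀ p t t', 0 < N.pre p t → 0 < N.pre p t' → N.pre p t = N.pre p t'

/-- A place with at least two output transitions. -/
def sharedPlace (N : PetriNet P T) (p : P) : Prop :=
  ∃ t t', t ≠ t' ∧ 0 < N.pre p t ∧ 0 < N.pre p t'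

/-- Homogeneous net with at most one shared place. -/
def H1S (N : PetriNet P T) : Prop :=
  N.homogeneous ∧ ∀ p q, N.sharedPlace p → N.sharedPlace q → p = q

/-- H1S net such that deleting the shared place (if any) yields a WMG≤ :
every non-shared place has at most one input and at most one output transition. -/
def H1S_WMGle (N : PetriNet P T) : Prop :=
  N.H1S ∧ ∀ p, ¬ N.sharedPlace p →
    (∀ t t', 0 < N.post t p → 0 < N.post t' p → t = t') ∧
    (∀ t t', 0 < N.pre p t → 0 < N.pre p t' → t = t')

end PetriNet

namespace PetriNet

/-- Residue of a sequence with respect to a T-vector `Y`: for each transition `t`,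
remove the `min(count, Y t)` leftmost occurrences of `t`. -/
def residueVec {T : Type} [DecidableEq T] : List T → (T → ℕ) → List T
  | [], _ => []
  | t :: σ, Y =>
    if 0 < Y t then residueVec σ (Function.update Y t (Y t - 1))
    else t :: residueVec σ Y

end PetriNet

/-!
Induction on `∑ t, Y t`. By liveness, some firing sequence from `M₀` reaches a marking that
enables a `Y`-positive transition. While no `Y`-positive transition is enabled, every transition
enabled at the current marking `M₀` is also enabled at `M = M₀ + I·Y`, so this prefix fires in
step from `M₀` and from `M` and preserves the state equation; then the `Y`-positive transition
fires from `M₀` alone, decreasing `Y` by one.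

The crux is that inheritance of enabledness. If `u` is enabled at `M₀` but not at `M`, then the
disabling place `p` is also consumed by some `Y`-positive `v ≠ u`, so `p` is the shared place.
By homogeneity, `p` then disables no `Y`-positive transition `x`, so `x` is disabled at `M₀`
by a non-shared place `q`. `q` has `x` as its only output, so `M q ≥ 0` forces its single input
transition to be `Y`-positive as well. These places `q` form a siphon deadlocked at `M₀`, which
contradicts liveness.

Every marking reachable from `M` again solves the state equation, so it reaches a marking
reachable from `M₀`; hence `(N, M)` is live.
-/

namespace PetriNet

variable {P T : Type} (N : PetriNet P T)

theorem feasible_append (M : P → ℕ) (σ τ : List T) :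
    N.feasible M (σ ++ τ) ↔ N.feasible M σ ∧ N.feasible (N.fireSeq M σ) τ := by
  induction σ generalizing M with
  | nil => simp [feasible, fireSeq]
  | cons t σ ih => simp [feasible, fireSeq, ih, and_assoc]

theorem fireSeq_append (M : P → ℕ) (σ τ : List T) :
    N.fireSeq M (σ ++ τ) = N.fireSeq (N.fireSeq M σ) τ := by
  induction σ generalizing M with
  | nil => rfl
  | cons t σ ih => exact ih _

variable {N}

theorem reach_refl (M : P → ℕ) : N.reach M M := ⟨[], trivial, rfl⟩

theorem reach_trans {M₁ M₂ M₃ : P → ℕ} (h₁₂ : N.reach M₁ M₂) (h₂₃ : N.reach M₂ M₃) :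
    N.reach M₁ M₃ := by
  obtain ⟨σ, hσ, rfl⟩ := h₁₂
  obtain ⟨τ, hτ, rfl⟩ := h₂₃
  exact ⟨σ ++ τ, (N.feasible_append M₁ σ τ).2 ⟨hσ, hτ⟩, N.fireSeq_append M₁ σ τ⟩

theorem live_of_reach {M₀ M : P → ℕ} (hlive : N.live M₀) (hreach : N.reach M₀ M) :
    N.live M :=
  fun _ hM' t => hlive _ (reach_trans hreach hM') t

theorem fire_cast {M : P → ℕ} {t : T} (ht : N.enabled M t) (p : P) :
    (N.fire M t p : ℤ) = M p + N.incidence p t := by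
  simp only [fire, incidence]
  push_cast [ht p]
  ring

theorem count_cons_eq_single_add [DecidableEq T] (t s : T) (σ : List T) :
    (t :: σ).count s = (Pi.single t 1 : T → ℕ) s + σ.count s := by
  rcases eq_or_ne s t with rfl | hs
  · simp [add_comm]
  · simp [hs, List.count_cons_of_ne (Ne.symm hs)]

section StateEquation

variable [Fintype T]

def stateEq (N : PetriNet P T) (M₀ : P → ℕ) (Y : T → ℕ) (M : P → ℕ) : Prop :=
  ∀ p, (M p : ℤ) = M₀ p + ∑ t, N.incidence p t * Y t

theorem stateEq.eq_of_zero {M₀ M : P → ℕ} (h : N.stateEq M₀ 0 M) : M = M₀ := by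
  funext p
  simpa using h p

theorem stateEq.trans {M₀ M₁ M₂ : P → ℕ} {Y Z : T → ℕ} (h₁ : N.stateEq M₀ Y M₁)
    (h₂ : N.stateEq M₁ Z M₂) : N.stateEq M₀ (Y + Z) M₂ := fun p => by
  simp only [h₂ p, h₁ p, Pi.add_apply, Nat.cast_add, mul_add, Finset.sum_add_distrib]
  ring

theorem stateEq.cancel_left {M₀ M₁ M : P → ℕ} {Y Z : T → ℕ} (h : N.stateEq M₀ (Y + Z) M)
    (h₁ : N.stateEq M₀ Y M₁) : N.stateEq M₁ Z M := fun p => by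
  simp only [h p, h₁ p, Pi.add_apply, Nat.cast_add, mul_add, Finset.sum_add_distrib]
  ring

theorem stateEq_fire [DecidableEq T] {M : P → ℕ} {t : T} (ht : N.enabled M t) :
    N.stateEq M (Pi.single t 1) (N.fire M t) := fun p => by
  simp [fire_cast ht, Pi.single_apply]

theorem stateEq_fireSeq [DecidableEq T] {M : P → ℕ} {σ : List T} (hσ : N.feasible M σ) :
    N.stateEq M (fun t => σ.count t) (N.fireSeq M σ) := by
  induction σ generalizing M with
  | nil => exact fun p => by simp [fireSeq]
  | cons t σ ih =>
    have hcount : (fun s => (t :: σ).count s) = Pi.single t 1 + fun s => σ.count s :=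
      funext fun s => count_cons_eq_single_add t s σ
    rw [hcount]
    exact (stateEq_fire hσ.1).trans (ih hσ.2)

theorem stateEq.fire_fire {M₀ M : P → ℕ} {Y : T → ℕ} {t : T} (h : N.stateEq M₀ Y M)
    (h₀ : N.enabled M₀ t) (h₁ : N.enabled M t) : N.stateEq (N.fire M₀ t) Y (N.fire M t) :=
  fun p => by
    rw [fire_cast h₁, fire_cast h₀, h p]
    ring

theorem stateEq.exists_pos_pre {M₀ M : P → ℕ} {Y : T → ℕ} {p : P} (h : N.stateEq M₀ Y M)
    (hlt : M p < M₀ p) : ∃ v, 0 < Y v ∧ 0 < N.pre p v := by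
  have hneg : ∑ t, N.incidence p t * Y t < 0 := by
    have := h p
    omega
  obtain ⟨v, -, hv⟩ := Finset.exists_lt_of_sum_lt (hneg.trans_eq Finset.sum_const_zero.symm)
  refine ⟨v, Nat.pos_of_ne_zero fun hY => by simp [hY] at hv, ?_⟩
  by_contra! hpre
  simp only [incidence, Nat.le_zero.mp hpre, Nat.cast_zero, sub_zero] at hv
  exact hv.not_ge (by positivity)

end StateEquation

theorem deadlockedAt_fire {D : Set P} {M : P → ℕ} {t : T} (hD : N.siphon D)
    (hdead : N.deadlockedAt D M) (ht : N.enabled M t) : N.deadlockedAt D (N.fire M t) := by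
  have hpre : ∀ p ∈ D, N.pre p t = 0 := fun p hp => by
    by_contra hne
    exact (hdead p hp t (Nat.pos_of_ne_zero hne)).not_ge (ht p)
  have hpost : ∀ p ∈ D, N.post t p = 0 := fun p hp => by
    by_contra hne
    obtain ⟨p', hp', hpre'⟩ := hD.2 t ⟨p, hp, Nat.pos_of_ne_zero hne⟩
    exact hpre'.ne' (hpre p' hp')
  intro p hp
  simpa [fire, hpre p hp, hpost p hp] using hdead p hp

theorem deadlockedAt_fireSeq {D : Set P} {M : P → ℕ} {σ : List T} (hD : N.siphon D)
    (hdead : N.deadlockedAt D M) (hσ : N.feasible M σ) :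
    N.deadlockedAt D (N.fireSeq M σ) := by
  induction σ generalizing M with
  | nil => exact hdead
  | cons t σ ih => exact ih (deadlockedAt_fire hD hdead hσ.1) hσ.2

theorem not_live_of_deadlockedAt {D : Set P} {M : P → ℕ} {p : P} {t : T} (hD : N.siphon D)
    (hdead : N.deadlockedAt D M) (hp : p ∈ D) (ht : 0 < N.pre p t) : ¬ N.live M := by
  intro hlive
  obtain ⟨_, ⟨σ, hσ, rfl⟩, hen⟩ := hlive M (reach_refl M) t
  exact (deadlockedAt_fireSeq hD hdead hσ p hp t ht).not_ge (hen p)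

section H1SWMGle

variable {M₀ M : P → ℕ} {Y : T → ℕ}

def blockingPlaces (N : PetriNet P T) (M₀ : P → ℕ) (Y : T → ℕ) : Set P :=
  {q | ¬ N.sharedPlace q ∧ ∃ x, 0 < Y x ∧ M₀ q < N.pre q x}

theorem exists_sole_output_of_mem_blockingPlaces (hclass : N.H1S_WMGle) {q : P}
    (hq : q ∈ N.blockingPlaces M₀ Y) :
    ∃ x, 0 < Y x ∧ M₀ q < N.pre q x ∧ ∀ s, 0 < N.pre q s → s = x := by
  obtain ⟨hns, x, hx, hlt⟩ := hq
  exact ⟨x, hx, hlt, fun s hs => (hclass.2 q hns).2 s x hs (by omega)⟩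

theorem pos_of_post_pos_of_mem_blockingPlaces [Fintype T] (hclass : N.H1S_WMGle)
    (h : N.stateEq M₀ Y M) {q : P} (hq : q ∈ N.blockingPlaces M₀ Y) {s : T}
    (hs : 0 < N.post s q) : 0 < Y s := by
  obtain ⟨x, hx, hlt, hout⟩ := exists_sole_output_of_mem_blockingPlaces hclass hq
  have hsplit : ∑ t, N.incidence q t * Y t
      = ∑ t, (N.post t q * Y t : ℤ) - N.pre q x * Y x := by
    simp only [incidence, sub_mul, Finset.sum_sub_distrib]
    congr 1
    refine Finset.sum_eq_single x (fun t _ htx => ?_) (by simp)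
    rw [Nat.eq_zero_of_not_pos fun ht => htx (hout t ht)]
    simp
  have hin : 0 < ∑ t, (N.post t q * Y t : ℤ) := by
    have hxY : (N.pre q x : ℤ) ≤ N.pre q x * Y x :=
      le_mul_of_one_le_right (by positivity) (by exact_mod_cast hx)
    linarith [h q]
  obtain ⟨c, -, hc⟩ := Finset.exists_lt_of_sum_lt (Finset.sum_const_zero.trans_lt hin)
  have hc' : 0 < N.post c q ∧ 0 < Y c := by
    constructor <;> exact Nat.pos_of_ne_zero fun h0 => by simp [h0] at hc
  rw [(hclass.2 q hq.1).1 s c hs hc'.1]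
  exact hc'.2

variable {p : P} {u : T}

theorem exists_mem_blockingPlaces (hclass : N.H1S_WMGle) (hp : N.sharedPlace p)
    (hpu : 0 < N.pre p u) (hu : N.enabled M₀ u) {x : T} (hx : 0 < Y x)
    (hxdis : ¬ N.enabled M₀ x) : ∃ q ∈ N.blockingPlaces M₀ Y, 0 < N.pre q x := by
  obtain ⟨q, hq⟩ := not_forall.1 hxdis
  have hq' : M₀ q < N.pre q x := not_le.1 hq
  refine ⟨q, ⟨fun hqs => ?_, x, hx, hq'⟩, by omega⟩
  obtain rfl := hclass.1.2 q p hqs hp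
  have := hclass.1.1 q x u (by omega) hpu
  have := hu q
  omega

theorem siphon_blockingPlaces [Fintype T] (hclass : N.H1S_WMGle) (h : N.stateEq M₀ Y M)
    (hp : N.sharedPlace p) (hpu : 0 < N.pre p u) (hu : N.enabled M₀ u)
    (hdis : ∀ t, 0 < Y t → ¬ N.enabled M₀ t) {x : T} (hx : 0 < Y x) :
    N.siphon (N.blockingPlaces M₀ Y) := by
  refine ⟨?_, fun s ⟨q, hq, hs⟩ => ?_⟩
  · obtain ⟨q, hq, -⟩ := exists_mem_blockingPlaces hclass hp hpu hu hx (hdis x hx)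
    exact ⟨q, hq⟩
  · have hYs := pos_of_post_pos_of_mem_blockingPlaces hclass h hq hs
    exact exists_mem_blockingPlaces hclass hp hpu hu hYs (hdis s hYs)

theorem deadlockedAt_blockingPlaces (hclass : N.H1S_WMGle) :
    N.deadlockedAt (N.blockingPlaces M₀ Y) M₀ := fun q hq t ht => by
  obtain ⟨x, -, hlt, hout⟩ := exists_sole_output_of_mem_blockingPlaces hclass hq
  rwa [hout t ht]

theorem enabled_of_stateEq [Fintype T] (hclass : N.H1S_WMGle) (hlive : N.live M₀)
    (h : N.stateEq M₀ Y M) (hdis : ∀ t, 0 < Y t → ¬ N.enabled M₀ t) (hu : N.enabled M₀ u) :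
    N.enabled M u := by
  intro p
  by_contra! hlt
  obtain ⟨v, hv, hpv⟩ := h.exists_pos_pre (lt_of_lt_of_le hlt (hu p))
  have hp : N.sharedPlace p := ⟨v, u, fun hvu => hdis v hv (hvu ▸ hu), hpv, by omega⟩
  have hD := siphon_blockingPlaces hclass h hp (by omega) hu hdis hv
  obtain ⟨q, hq, hqv⟩ := exists_mem_blockingPlaces hclass hp (by omega) hu hv (hdis v hv)
  exact not_live_of_deadlockedAt hD (deadlockedAt_blockingPlaces hclass) hq hqv hlive

end H1SWMGle

theorem single_add_update_pred [DecidableEq T] {Y : T → ℕ} {t : T} (ht : 0 < Y t) :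
    Pi.single t 1 + Function.update Y t (Y t - 1) = Y := by
  funext s
  rcases eq_or_ne s t with rfl | hs
  · simp only [Pi.add_apply, Pi.single_eq_same, Function.update_self]
    omega
  · simp [hs]

theorem residueVec_append_cons [DecidableEq T] {τ σ : List T} {Y : T → ℕ} {t : T}
    (hτ : ∀ x ∈ τ, Y x = 0) (ht : 0 < Y t) :
    residueVec (τ ++ t :: σ) Y = τ ++ residueVec σ (Function.update Y t (Y t - 1)) := by
  induction τ with
  | nil => simp [residueVec, ht]
  | cons u τ ih =>
    simp only [List.forall_mem_cons] at hτ
    simp [residueVec, hτ.1, ih hτ.2]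

variable [Fintype T] {M₀ M : P → ℕ} {Y : T → ℕ}

theorem exists_common_prefix (hclass : N.H1S_WMGle) {ρ : List T} (hlive : N.live M₀)
    (h : N.stateEq M₀ Y M) (hρ : N.feasible M₀ ρ)
    (hen : ∃ t, 0 < Y t ∧ N.enabled (N.fireSeq M₀ ρ) t) :
    ∃ τ t, (∀ x ∈ τ, Y x = 0) ∧ N.feasible M₀ τ ∧ N.feasible M τ ∧
      N.stateEq (N.fireSeq M₀ τ) Y (N.fireSeq M τ) ∧ 0 < Y t ∧
      N.enabled (N.fireSeq M₀ τ) t := by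
  induction ρ generalizing M₀ M with
  | nil =>
    obtain ⟨t, ht, hent⟩ := hen
    exact ⟨[], t, by simp, trivial, trivial, h, ht, hent⟩
  | cons u ρ ih =>
    by_cases hnow : ∃ t, 0 < Y t ∧ N.enabled M₀ t
    · obtain ⟨t, ht, hent⟩ := hnow
      exact ⟨[], t, by simp, trivial, trivial, h, ht, hent⟩
    have hdis : ∀ t, 0 < Y t → ¬ N.enabled M₀ t := fun t ht hent => hnow ⟨t, ht, hent⟩
    have hu := hρ.1
    have huM : N.enabled M u := enabled_of_stateEq hclass hlive h hdis hu
    have hYu : Y u = 0 := Nat.eq_zero_of_not_pos fun hYu => hdis u hYu hu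
    obtain ⟨τ, t, hτY, hτ₀, hτ, hτst, ht, hent⟩ :=
      ih (live_of_reach hlive ⟨[u], ⟨hu, trivial⟩, rfl⟩) (h.fire_fire hu huM) hρ.2 hen
    exact ⟨u :: τ, t, List.forall_mem_cons.2 ⟨hYu, hτY⟩, ⟨hu, hτ₀⟩, ⟨huM, hτ⟩, hτst, ht, hent⟩

theorem exists_residueVec_firing [DecidableEq T] (hclass : N.H1S_WMGle) (hlive : N.live M₀)
    (h : N.stateEq M₀ Y M) :
    ∃ σ, N.feasible M₀ σ ∧ (∀ t, Y t ≤ σ.count t) ∧ N.feasible M (residueVec σ Y) ∧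
      N.fireSeq M (residueVec σ Y) = N.fireSeq M₀ σ := by
  induction hn : ∑ t, Y t generalizing Y M₀ M with
  | zero =>
    obtain rfl : Y = 0 := funext fun t => Finset.sum_eq_zero_iff.1 hn t (Finset.mem_univ t)
    obtain rfl := h.eq_of_zero
    exact ⟨[], trivial, fun _ => le_rfl, trivial, rfl⟩
  | succ n ih =>
    obtain ⟨t₀, -, ht₀⟩ := Finset.exists_ne_zero_of_sum_ne_zero (hn.trans_ne n.succ_ne_zero)
    obtain ⟨_, ⟨ρ, hρ, rfl⟩, hent₀⟩ := hlive M₀ (reach_refl M₀) t₀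
    obtain ⟨τ, t, hτY, hτ₀, hτ, hτst, ht, hent⟩ :=
      exists_common_prefix hclass hlive h hρ ⟨t₀, Nat.pos_of_ne_zero ht₀, hent₀⟩
    set Y' := Function.update Y t (Y t - 1)
    have hY : Pi.single t 1 + Y' = Y := single_add_update_pred ht
    have hsum : ∑ s, Y' s = n := by
      simp only [← hY, Pi.add_apply, Finset.sum_add_distrib, Finset.sum_pi_single',
        Finset.mem_univ, if_true] at hn
      omega
    have hlive' : N.live (N.fire (N.fireSeq M₀ τ) t) :=
      live_of_reach hlive ⟨τ ++ [t], (N.feasible_append _ _ _).2 ⟨hτ₀, hent, trivial⟩,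
        N.fireSeq_append _ _ _⟩
    obtain ⟨σ, hσ, hcount, hres, hresM⟩ :=
      ih hlive' ((hY ▸ hτst).cancel_left (stateEq_fire hent)) hsum
    refine ⟨τ ++ t :: σ, (N.feasible_append _ _ _).2 ⟨hτ₀, hent, hσ⟩, fun s => ?_, ?_, ?_⟩
    · rw [← hY, List.count_append, count_cons_eq_single_add, Pi.add_apply]
      have := hcount s
      omega
    · rw [residueVec_append_cons hτY ht, feasible_append]
      exact ⟨hτ, hres⟩
    · rw [residueVec_append_cons hτY ht, fireSeq_append, fireSeq_append, hresM]
      rfl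

theorem live_of_potReach (hclass : N.H1S_WMGle) (hlive : N.live M₀) (h : N.potReach M₀ M) :
    N.live M := by
  obtain ⟨Y, h : N.stateEq M₀ Y M⟩ := h
  rintro _ ⟨τ, hτ, rfl⟩ t
  obtain ⟨σ, hσ, -, hres, hresM⟩ :=
    exists_residueVec_firing hclass hlive (h.trans (stateEq_fireSeq hτ))
  obtain ⟨M', hM', hen⟩ := hlive _ ⟨σ, hσ, rfl⟩ t
  exact ⟨M', reach_trans ⟨_, hres, hresM⟩ hM', hen⟩

end PetriNet

/-- in a live H1S-WMG≤ system, for every solution `(M, Y)` of the state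
equation there is a feasible sequence `σ` from `M0` with Parikh vector at least `Y`,
leading to a marking `M'` that is also reached from `M` by firing `σ ∖ Y`;
consequently `(N, M)` is live. -/
theorem stmt6 {P T : Type} [Fintype T] [DecidableEq T] (N : PetriNet P T)
    (M0 : P → ℕ) (hclass : N.H1S_WMGle) (hlive : N.live M0)
    (Y : T → ℕ) (M : P → ℕ)
    (hstate : ∀ p, (M p : ℤ) = (M0 p : ℤ) + ∑ t, N.incidence p t * (Y t : ℤ)) :
    (∃ (M' : P → ℕ) (σ : List T),
      N.feasible M0 σ ∧ N.fireSeq M0 σ = M' ∧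
      (∀ t, Y t ≤ σ.count t) ∧
      N.feasible M (PetriNet.residueVec σ Y) ∧
      N.fireSeq M (PetriNet.residueVec σ Y) = M') ∧
    N.live M := by
  obtain ⟨σ, hσ, hcount, hres, hresM⟩ := N.exists_residueVec_firing hclass hlive hstate
  exact ⟨⟨_, σ, hσ, rfl, hcount, hres, hresM⟩, N.live_of_potReach hclass hlive ⟨Y, hstate⟩⟩
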